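/- arXiv:2503.06440 — 3 statements merged into one kernel-verified Lean document; each statement's English description precedes it below -/
import Mathlib

section
/- Taylor remainder formula for the discrete difference operator: if f : ℝ → ℝ is n+2 times continuously differentiable, then D_h^n f = f^{(n)} + R_{D_h^n}(f), where R_{D_h^n}(f)(x) = h² Σ_{k=0}^{n} C(n,k)(-1)^k ((n-2k)/2)^{n+2} ∫_0^1 ((1-σ)^{n+1}/(n+1)!) f^{(n+2)}(x + ((n-2k)h/2)σ) dσ. In particular, |D_h^n f(x) - f^{(n)}(x)| ≤ C h² sup|f^{(n+2)}| with C depending only on n. -/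
/-!
Expand each `f (x + (n - 2k) h / 2)` by Taylor's formula of order `n + 1` with integral
remainder at `x`. The centered moments `∑ₖ C(n,k) (-1)^k (n - 2k)^j` vanish for `j < n` (they are
`n`-th forward differences of polynomials of degree `< n`), equal `2^n n!` for `j = n`, and vanish
for `j = n + 1` because `k ↦ n - k` flips the sign of each term. Hence only `h^n f⁽ⁿ⁾(x)` and the
remainders survive, and each remainder integral is bounded by `sup |f⁽ⁿ⁺²⁾|`.
-/

open Finset intervalIntegral

/-- Iterated centered difference `D_h^n f (x) = h^{-n} Σ_{k=0}^n C(n,k) (-1)^k f(x + (n-2k)h/2)`. -/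
noncomputable def DhIter (h : ℝ) (n : ℕ) (f : ℝ → ℝ) : ℝ → ℝ := fun x =>
  (1 / h ^ n) * ∑ k ∈ Finset.range (n + 1),
    (n.choose k : ℝ) * (-1) ^ k * f (x + ((n : ℝ) - 2 * k) * h / 2)

section AlternatingMoments

variable {R : Type*} [CommRing R]

theorem sum_range_choose_mul_neg_one_pow_mul_pow (n i : ℕ) :
    ∑ k ∈ range (n + 1), (n.choose k : R) * (-1) ^ k * (k : R) ^ i
      = (-1) ^ n * (fwdDiff 1)^[n] (fun r : R => r ^ i) 0 := by
  rw [fwdDiff_iter_eq_sum_shift, mul_sum]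
  refine sum_congr rfl fun k hk => ?_
  have hsign : (-1 : R) ^ n * (-1) ^ (n - k) = (-1) ^ k := by
    rw [← pow_add, show n + (n - k) = k + 2 * (n - k) by grind, pow_add, pow_mul, neg_one_sq,
      one_pow, mul_one]
  simp only [zsmul_eq_mul, nsmul_eq_mul, zero_add, mul_one]
  push_cast
  linear_combination (n.choose k : R) * (k : R) ^ i * hsign.symm

theorem sum_range_choose_mul_neg_one_pow_mul_pow_of_lt {n i : ℕ} (h : i < n) :
    ∑ k ∈ range (n + 1), (n.choose k : R) * (-1) ^ k * (k : R) ^ i = 0 := by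
  rw [sum_range_choose_mul_neg_one_pow_mul_pow, fwdDiff_iter_pow_eq_zero_of_lt h, Pi.zero_apply,
    mul_zero]

theorem sum_range_choose_mul_neg_one_pow_mul_pow_self (n : ℕ) :
    ∑ k ∈ range (n + 1), (n.choose k : R) * (-1) ^ k * (k : R) ^ n = (-1) ^ n * n.factorial := by
  rw [sum_range_choose_mul_neg_one_pow_mul_pow, fwdDiff_iter_eq_factorial]
  rfl

theorem sum_range_choose_mul_neg_one_pow_mul_add_pow (n j : ℕ) (a b : R) :
    ∑ k ∈ range (n + 1), (n.choose k : R) * (-1) ^ k * (b * k + a) ^ j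
      = ∑ i ∈ range (j + 1), b ^ i * a ^ (j - i) * j.choose i
          * ∑ k ∈ range (n + 1), (n.choose k : R) * (-1) ^ k * (k : R) ^ i := by
  simp_rw [add_pow, mul_sum]
  rw [sum_comm]
  refine sum_congr rfl fun i _ => sum_congr rfl fun k _ => ?_
  ring

theorem sum_range_choose_mul_neg_one_pow_mul_add_pow_of_lt {n j : ℕ} (h : j < n) (a b : R) :
    ∑ k ∈ range (n + 1), (n.choose k : R) * (-1) ^ k * (b * k + a) ^ j = 0 := by
  rw [sum_range_choose_mul_neg_one_pow_mul_add_pow]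
  refine sum_eq_zero fun i hi => ?_
  rw [sum_range_choose_mul_neg_one_pow_mul_pow_of_lt (by grind), mul_zero]

theorem sum_range_choose_mul_neg_one_pow_mul_add_pow_self (n : ℕ) (a b : R) :
    ∑ k ∈ range (n + 1), (n.choose k : R) * (-1) ^ k * (b * k + a) ^ n
      = (-b) ^ n * n.factorial := by
  rw [sum_range_choose_mul_neg_one_pow_mul_add_pow, sum_range_succ, sum_eq_zero fun i hi => by
    rw [sum_range_choose_mul_neg_one_pow_mul_pow_of_lt (mem_range.mp hi), mul_zero],
    sum_range_choose_mul_neg_one_pow_mul_pow_self, Nat.sub_self, Nat.choose_self, neg_pow]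
  ring

theorem sum_range_choose_mul_neg_one_pow_mul_sub_two_mul_pow_succ (n : ℕ) :
    ∑ k ∈ range (n + 1), (n.choose k : R) * (-1) ^ k * ((n : R) - 2 * k) ^ (n + 1) = 0 := by
  refine sum_involution (fun k _ => n - k) (fun k hk => ?_) (fun k hk hne => ?_)
    (fun k hk => by grind) (fun k hk => by grind)
  · have hkn : k ≤ n := Nat.lt_succ_iff.mp (mem_range.mp hk)
    have hsign : (-1 : R) ^ (n - k) * (-1) ^ (n + 1) = -(-1) ^ k := by
      rw [← pow_add, show n - k + (n + 1) = k + 1 + 2 * (n - k) by grind, pow_add, pow_mul,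
        neg_one_sq, one_pow, mul_one, pow_succ, mul_neg_one]
    rw [Nat.choose_symm hkn, Nat.cast_sub hkn,
      show (n : R) - 2 * (n - k) = -1 * ((n : R) - 2 * k) by ring, mul_pow]
    linear_combination (n.choose k : R) * ((n : R) - 2 * k) ^ (n + 1) * hsign
  · intro hfix
    have hcenter : (n : R) - 2 * k = 0 := by
      rw [show n = 2 * k by grind, Nat.cast_mul, Nat.cast_ofNat, sub_self]
    simp [hcenter] at hne

theorem sum_range_choose_mul_neg_one_pow_mul_sub_two_mul_pow_of_lt {n j : ℕ} (h : j < n) :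
    ∑ k ∈ range (n + 1), (n.choose k : R) * (-1) ^ k * ((n : R) - 2 * k) ^ j = 0 := by
  simpa [show ∀ k : R, (n : R) - 2 * k = -2 * k + n from fun k => by ring] using
    sum_range_choose_mul_neg_one_pow_mul_add_pow_of_lt h (n : R) (-2)

theorem sum_range_choose_mul_neg_one_pow_mul_sub_two_mul_pow_self (n : ℕ) :
    ∑ k ∈ range (n + 1), (n.choose k : R) * (-1) ^ k * ((n : R) - 2 * k) ^ n
      = 2 ^ n * n.factorial := by
  simpa [show ∀ k : R, (n : R) - 2 * k = -2 * k + n from fun k => by ring] using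
    sum_range_choose_mul_neg_one_pow_mul_add_pow_self n (n : R) (-2)

theorem sum_range_choose_mul_neg_one_pow_mul_sum_range_mul_pow (n : ℕ) (s : R) (c : ℕ → R) :
    ∑ k ∈ range (n + 1), (n.choose k : R) * (-1) ^ k
        * ∑ j ∈ range (n + 2), (((n : R) - 2 * k) * s) ^ j * c j
      = (2 * s) ^ n * n.factorial * c n := by
  calc _ = ∑ j ∈ range (n + 2), (∑ k ∈ range (n + 1),
          (n.choose k : R) * (-1) ^ k * ((n : R) - 2 * k) ^ j) * (s ^ j * c j) := by
        simp_rw [mul_sum, sum_mul]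
        rw [sum_comm]
        exact sum_congr rfl fun j _ => sum_congr rfl fun k _ => by rw [mul_pow]; ring
    _ = (2 * s) ^ n * n.factorial * c n := by
        rw [sum_range_succ, sum_range_succ,
          sum_range_choose_mul_neg_one_pow_mul_sub_two_mul_pow_succ,
          sum_range_choose_mul_neg_one_pow_mul_sub_two_mul_pow_self, sum_eq_zero fun j hj => by
            rw [sum_range_choose_mul_neg_one_pow_mul_sub_two_mul_pow_of_lt (mem_range.mp hj),
              zero_mul]]
        ring

end AlternatingMoments

theorem map_add_eq_sum_add_integral_iteratedDeriv {f : ℝ → ℝ} {m : ℕ} (hf : ContDiff ℝ (m + 1) f)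
    (x t : ℝ) :
    f (x + t) = ∑ j ∈ range (m + 1), t ^ j / j.factorial * iteratedDeriv j f x
      + t ^ (m + 1) * ∫ σ in (0 : ℝ)..1,
          (1 - σ) ^ m / m.factorial * iteratedDeriv (m + 1) f (x + t * σ) := by
  have := map_add_eq_sum_add_integral_iteratedFDeriv (x := x) (y := t) fun _ _ => hf.contDiffAt
  simp only [iteratedFDeriv_apply_eq_iteratedDeriv_mul_prod, prod_const, card_univ,
    Fintype.card_fin, smul_eq_mul] at this
  rw [this, ← integral_const_mul, ← integral_const_mul]
  congr 1
  · exact sum_congr rfl fun j _ => by ring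
  · exact integral_congr fun σ _ => by simp only [mul_comm σ t]; ring

noncomputable def DhIterRemainder (h : ℝ) (n : ℕ) (f : ℝ → ℝ) (x : ℝ) : ℝ :=
  h ^ 2 * ∑ k ∈ range (n + 1),
    (n.choose k : ℝ) * (-1) ^ k * (((n : ℝ) - 2 * k) / 2) ^ (n + 2)
      * ∫ σ in (0 : ℝ)..1,
          (1 - σ) ^ (n + 1) / ((n + 1).factorial : ℝ)
            * iteratedDeriv (n + 2) f (x + ((n : ℝ) - 2 * k) * h / 2 * σ)

theorem DhIter_eq_iteratedDeriv_add_remainder {h : ℝ} (hh : h ≠ 0) {n : ℕ} {f : ℝ → ℝ}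
    (hf : ContDiff ℝ (n + 2) f) (x : ℝ) :
    DhIter h n f x = iteratedDeriv n f x + DhIterRemainder h n f x := by
  have htaylor (k : ℕ) : f (x + ((n : ℝ) - 2 * k) * h / 2)
      = ∑ j ∈ range (n + 2), (((n : ℝ) - 2 * k) * (h / 2)) ^ j
          * (iteratedDeriv j f x / j.factorial)
        + h ^ n * (h ^ 2 * ((((n : ℝ) - 2 * k) / 2) ^ (n + 2) * ∫ σ in (0 : ℝ)..1,
          (1 - σ) ^ (n + 1) / ((n + 1).factorial : ℝ)
            * iteratedDeriv (n + 2) f (x + ((n : ℝ) - 2 * k) * h / 2 * σ))) := by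
    rw [map_add_eq_sum_add_integral_iteratedDeriv (m := n + 1) (f := f) (by exact_mod_cast hf)]
    congr 1
    · exact sum_congr rfl fun j _ => by ring
    · rw [show ((n : ℝ) - 2 * k) * h / 2 = ((n : ℝ) - 2 * k) / 2 * h by ring, mul_pow]
      ring
  have hsum : ∑ k ∈ range (n + 1),
        (n.choose k : ℝ) * (-1) ^ k * f (x + ((n : ℝ) - 2 * k) * h / 2)
      = h ^ n * iteratedDeriv n f x + h ^ n * DhIterRemainder h n f x := by
    simp_rw [htaylor, mul_add, sum_add_distrib,
      sum_range_choose_mul_neg_one_pow_mul_sum_range_mul_pow]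
    rw [DhIterRemainder, mul_sum, mul_sum]
    congr 1
    · field_simp
    · exact sum_congr rfl fun k _ => by ring
  rw [DhIter, hsum]
  field_simp

theorem abs_integral_one_sub_pow_div_factorial_mul_le {m : ℕ} {g : ℝ → ℝ} {M : ℝ}
    (hg : ∀ σ ∈ Set.Icc (0 : ℝ) 1, |g σ| ≤ M) :
    |∫ σ in (0 : ℝ)..1, (1 - σ) ^ m / m.factorial * g σ| ≤ M := by
  have hbound : ∀ σ ∈ Set.uIoc (0 : ℝ) 1, ‖(1 - σ) ^ m / m.factorial * g σ‖ ≤ M := by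
    intro σ hσ
    rw [Set.uIoc_of_le zero_le_one] at hσ
    have hkernel : |(1 - σ) ^ m / m.factorial| ≤ 1 := by
      rw [abs_of_nonneg (by have := hσ.2; positivity)]
      exact div_le_one_of_le₀
        ((pow_le_one₀ (by linarith [hσ.2]) (by linarith [hσ.1])).trans
          (by exact_mod_cast m.factorial_pos))
        (by positivity)
    rw [Real.norm_eq_abs, abs_mul]
    exact (mul_le_of_le_one_left (abs_nonneg _) hkernel).trans
      (hg σ (Set.Ioc_subset_Icc_self hσ))
  simpa using norm_integral_le_of_norm_le_const hbound

theorem abs_DhIterRemainder_le (h : ℝ) (n : ℕ) (f : ℝ → ℝ) (x : ℝ) {M : ℝ}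
    (hM : ∀ y, |iteratedDeriv (n + 2) f y| ≤ M) :
    |DhIterRemainder h n f x|
      ≤ (∑ k ∈ range (n + 1), (n.choose k : ℝ) * |((n : ℝ) - 2 * k) / 2| ^ (n + 2))
          * h ^ 2 * M := by
  have hterm (k : ℕ) : |(n.choose k : ℝ) * (-1) ^ k * (((n : ℝ) - 2 * k) / 2) ^ (n + 2)
      * ∫ σ in (0 : ℝ)..1, (1 - σ) ^ (n + 1) / ((n + 1).factorial : ℝ)
          * iteratedDeriv (n + 2) f (x + ((n : ℝ) - 2 * k) * h / 2 * σ)|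
      ≤ (n.choose k : ℝ) * |((n : ℝ) - 2 * k) / 2| ^ (n + 2) * M := by
    rw [abs_mul, abs_mul, abs_mul, abs_pow, abs_neg, abs_one, one_pow, mul_one, Nat.abs_cast,
      abs_pow]
    gcongr
    exact abs_integral_one_sub_pow_div_factorial_mul_le fun σ _ => hM _
  calc |DhIterRemainder h n f x|
      = h ^ 2 * |∑ k ∈ range (n + 1), (n.choose k : ℝ) * (-1) ^ k
          * (((n : ℝ) - 2 * k) / 2) ^ (n + 2) * ∫ σ in (0 : ℝ)..1,
            (1 - σ) ^ (n + 1) / ((n + 1).factorial : ℝ)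
              * iteratedDeriv (n + 2) f (x + ((n : ℝ) - 2 * k) * h / 2 * σ)| := by
        rw [DhIterRemainder, abs_mul, abs_of_nonneg (sq_nonneg h)]
    _ ≤ h ^ 2 * ∑ k ∈ range (n + 1),
          (n.choose k : ℝ) * |((n : ℝ) - 2 * k) / 2| ^ (n + 2) * M := by
        gcongr
        exact (abs_sum_le_sum_abs _ _).trans (sum_le_sum fun k _ => hterm k)
    _ = _ := by rw [← sum_mul]; ring

/-- Taylor remainder formula for the iterated centered difference: if `f` is `C^{n+2}` then
`D_h^n f = f^{(n)} + R_{D_h^n}(f)` with the explicit integral remainder, and in particular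
`|D_h^n f(x) - f^{(n)}(x)| ≤ C h² sup |f^{(n+2)}|` with `C` depending only on `n`. -/
theorem DhIter_taylor (n : ℕ) :
    ∃ C > 0, ∀ (h : ℝ), 0 < h → ∀ (f : ℝ → ℝ), ContDiff ℝ (n + 2) f → ∀ x : ℝ,
      (DhIter h n f x
          = iteratedDeriv n f x
            + h ^ 2 * ∑ k ∈ Finset.range (n + 1),
                (n.choose k : ℝ) * (-1) ^ k * (((n : ℝ) - 2 * k) / 2) ^ (n + 2)
                  * ∫ σ in (0:ℝ)..1,
                      (1 - σ) ^ (n + 1) / ((n + 1).factorial : ℝ)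
                        * iteratedDeriv (n + 2) f (x + ((n : ℝ) - 2 * k) * h / 2 * σ)) ∧
        ∀ M : ℝ, (∀ y : ℝ, |iteratedDeriv (n + 2) f y| ≤ M) →
          |DhIter h n f x - iteratedDeriv n f x| ≤ C * h ^ 2 * M := by
  set S := ∑ k ∈ range (n + 1), (n.choose k : ℝ) * |((n : ℝ) - 2 * k) / 2| ^ (n + 2)
  refine ⟨S + 1, by positivity, fun h hh f hf x => ?_⟩
  have hexpand := DhIter_eq_iteratedDeriv_add_remainder hh.ne' hf x
  refine ⟨hexpand, fun M hM => ?_⟩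
  have hM0 : 0 ≤ M := (abs_nonneg _).trans (hM 0)
  calc |DhIter h n f x - iteratedDeriv n f x| = |DhIterRemainder h n f x| := by
        rw [hexpand, add_sub_cancel_left]
    _ ≤ S * h ^ 2 * M := abs_DhIterRemainder_le h n f x hM
    _ ≤ (S + 1) * h ^ 2 * M := by gcongr; linarith
end

section
/- Existence of a weight function for Carleman estimates: let G = (0,1) and let G₂ be a nonempty open subinterval with closure contained in G. Then there exists an open interval G̃ ⊃ [0,1] and a smooth function ψ on the closure of G̃ such that 0 < ψ ≤ 1 on G̃, |ψ'(x)| ≥ C₀ > 0 for all x in the closure of G \ G₂ for some constant C₀, ψ'(0) > 0 and ψ'(1) < 0. -/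
/-!
Take the downward parabola `ψ x = 1 - (x - m)² / 8` with vertex at the midpoint `m` of `G₂`.
Its derivative `-(x - m) / 4` vanishes only at `m ∈ G₂`, so off `G₂` it is at least
`(b - a) / 8` in absolute value, and it is positive at `0 < m` and negative at `1 > m`.
On `(-1, 2)` we have `|x - m| < 2`, hence `1/2 < ψ ≤ 1`.
-/

open Set

namespace CarlemanWeight

noncomputable def parabola (m : ℝ) (x : ℝ) : ℝ := 1 - (x - m) ^ 2 / 8

variable (m : ℝ)

theorem contDiff_parabola {n : WithTop ℕ∞} : ContDiff ℝ n (parabola m) := by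
  unfold parabola
  fun_prop

theorem hasDerivAt_parabola (x : ℝ) : HasDerivAt (parabola m) (-(x - m) / 4) x := by
  have h := ((((hasDerivAt_id x).sub_const m).pow 2).div_const 8).const_sub 1
  exact h.congr_deriv (by simp only [id, Nat.cast_ofNat]; ring)

theorem deriv_parabola (x : ℝ) : deriv (parabola m) x = -(x - m) / 4 :=
  (hasDerivAt_parabola m x).deriv

theorem parabola_pos_of_abs_sub_lt {x : ℝ} (hx : |x - m| < 2) : 0 < parabola m x := by
  have : (x - m) ^ 2 < 2 ^ 2 := sq_lt_sq' (abs_lt.mp hx).1 (abs_lt.mp hx).2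
  unfold parabola
  linarith

theorem parabola_le_one (x : ℝ) : parabola m x ≤ 1 := by
  unfold parabola
  linarith [sq_nonneg (x - m)]

end CarlemanWeight

theorem half_sub_le_abs_sub_midpoint {a b x : ℝ} (hx : x ∉ Ioo a b) :
    (b - a) / 2 ≤ |x - (a + b) / 2| := by
  rcases not_and_or.mp hx with h | h
  · rw [abs_sub_comm]; exact le_abs.mpr (Or.inl (by linarith [not_lt.mp h]))
  · exact le_abs.mpr (Or.inl (by linarith [not_lt.mp h]))

open CarlemanWeight

/-- Existence of a weight function for Carleman estimates: for `G = (0,1)` and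
`G₂ = (a,b)` with closure contained in `G`, there is an open interval
`G̃ = (-ε, 1+ε) ⊃ [0,1]` and a `C^k` function `ψ` (for any prescribed `k`) with
`0 < ψ ≤ 1` on `G̃`, `|ψ'| ≥ C₀ > 0` on the closure of `G \ G₂`, `ψ'(0) > 0`
and `ψ'(1) < 0`. -/
theorem exists_carleman_weight (k : ℕ) (a b : ℝ) (ha : 0 < a) (hab : a < b) (hb : b < 1) :
    ∃ (ε : ℝ) (ψ : ℝ → ℝ), 0 < ε ∧ ContDiff ℝ k ψ ∧
      (∀ x ∈ Set.Ioo (-ε) (1 + ε), 0 < ψ x ∧ ψ x ≤ 1) ∧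
      (∃ C₀ > 0, ∀ x ∈ Set.Icc (0:ℝ) 1 \ Set.Ioo a b, C₀ ≤ |deriv ψ x|) ∧
      0 < deriv ψ 0 ∧ deriv ψ 1 < 0 := by
  set m := (a + b) / 2 with hm
  refine ⟨1, parabola m, one_pos, contDiff_parabola m, fun x hx => ⟨?_, parabola_le_one m x⟩,
    ⟨(b - a) / 8, by linarith, fun x hx => ?_⟩, ?_, ?_⟩
  · exact parabola_pos_of_abs_sub_lt m (abs_lt.mpr ⟨by linarith [hx.1], by linarith [hx.2]⟩)
  · rw [deriv_parabola, abs_div, abs_neg, abs_of_pos (four_pos : (0 : ℝ) < 4)]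
    linarith [half_sub_le_abs_sub_midpoint hx.2]
  · rw [deriv_parabola]; linarith [hm]
  · rw [deriv_parabola]; linarith [hm]
end

section
/- Lower bound on the derivative of the time-weight term at t = 0: with φ(x) = e^{μ(ψ(x)+6m)} − μe^{6μ(m+1)}, σ = λμ²e^{μ(6m−4)}, θ_t(0) = −4σ/T, and 0 < ψ(x) ≤ 1, it holds that λφ(x)θ_t(0) = (4/T)λ²μ²e^{μ(6m−4)}(μe^{6μ(m+1)} − e^{μ(ψ(x)+6m)}) ≥ c λ²μ³ e^{2μ(6m+1)} for all μ > 1 and all λ ≥ 1, where c > 0 is a constant independent of T, λ, μ (one may take any T with 0 < T < 1). -/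
open Real

/-! The weight `μ e^{6μ(m+1)}` dominates `e^{μ(ψ+6m)}` by a factor `μ e^{μ(6-ψ)} ≥ e > 2`, so the
bracket `μ e^{6μ(m+1)} − e^{μ(ψ+6m)}` is at least half of `μ e^{6μ(m+1)}`; since
`e^{μ(6m−4)} e^{6μ(m+1)} = e^{2μ(6m+1)}` and `4/T > 4`, the bound holds with `c = 2`. -/

lemma two_mul_exp_le_mul_exp {μ a b : ℝ} (hμ : 1 ≤ μ) (hab : a + 1 ≤ b) :
    2 * exp (μ * a) ≤ μ * exp (μ * b) :=
  calc 2 * exp (μ * a) ≤ exp 1 * exp (μ * a) := by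
        gcongr; linarith [add_one_le_exp (1 : ℝ)]
    _ = exp (1 + μ * a) := (exp_add _ _).symm
    _ ≤ exp (μ * b) := exp_le_exp.mpr (by nlinarith)
    _ ≤ μ * exp (μ * b) := le_mul_of_one_le_left (exp_pos _).le hμ

/-- Lower bound on the derivative of the time-weight term at `t = 0`:
with `φ(x) = e^{μ(ψ(x)+6m)} − μ e^{6μ(m+1)}`, `σ = λ μ² e^{μ(6m−4)}` and
`θ_t(0) = −4σ/T`, one has
`λ φ(x) θ_t(0) = (4/T) λ² μ² e^{μ(6m−4)} (μ e^{6μ(m+1)} − e^{μ(ψ(x)+6m)})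
  ≥ c λ² μ³ e^{2μ(6m+1)}` for a constant `c > 0` independent of `T, λ, μ`. -/
theorem time_weight_derivative_lower_bound :
    ∃ c > 0, ∀ (m : ℕ) (T lam μ ψx : ℝ), 1 ≤ m → 0 < T → T < 1 → 1 ≤ lam → 1 < μ →
      0 < ψx → ψx ≤ 1 →
      lam * (exp (μ * (ψx + 6 * m)) - μ * exp (6 * μ * (m + 1)))
          * (-(4 * (lam * μ ^ 2 * exp (μ * (6 * m - 4)))) / T)
        = 4 / T * lam ^ 2 * μ ^ 2 * exp (μ * (6 * m - 4))
            * (μ * exp (6 * μ * (m + 1)) - exp (μ * (ψx + 6 * m))) ∧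
      c * lam ^ 2 * μ ^ 3 * exp (2 * μ * (6 * m + 1))
        ≤ 4 / T * lam ^ 2 * μ ^ 2 * exp (μ * (6 * m - 4))
            * (μ * exp (6 * μ * (m + 1)) - exp (μ * (ψx + 6 * m))) := by
  refine ⟨2, two_pos, fun m T lam μ ψx _ hT hT1 _ hμ _ hψ1 => ⟨by field_simp; ring, ?_⟩⟩
  set P := lam ^ 2 * μ ^ 2 * exp (μ * (6 * m - 4))
  have hgap :
      μ * exp (6 * μ * (m + 1)) ≤ 2 * (μ * exp (6 * μ * (m + 1)) - exp (μ * (ψx + 6 * m))) := by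
    have h := two_mul_exp_le_mul_exp (a := ψx + 6 * m) (b := 6 * (m + 1)) hμ.le (by linarith)
    rw [show μ * (6 * (m + 1)) = 6 * μ * (m + 1) by ring] at h
    linarith
  have hT2 : 2 ≤ 2 / T := by rw [le_div_iff₀ hT]; linarith
  calc 2 * lam ^ 2 * μ ^ 3 * exp (2 * μ * (6 * m + 1))
      = 2 * P * (μ * exp (6 * μ * (m + 1))) := by
        rw [show 2 * μ * (6 * m + 1) = μ * (6 * m - 4) + 6 * μ * (m + 1) by ring, exp_add]; ring
    _ ≤ 2 / T * P * (μ * exp (6 * μ * (m + 1))) := by gcongr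
    _ ≤ 2 / T * P * (2 * (μ * exp (6 * μ * (m + 1)) - exp (μ * (ψx + 6 * m)))) := by gcongr
    _ = 4 / T * lam ^ 2 * μ ^ 2 * exp (μ * (6 * m - 4))
          * (μ * exp (6 * μ * (m + 1)) - exp (μ * (ψx + 6 * m))) := by ring
end
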